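/- arXiv:0710.2658 — 8 statements merged into one kernel-verified Lean document; each statement's English description precedes it below -/
import Mathlib

section
/- The rational function β(z) = −64 z³(z − 1)/(8z + 1) is a Belyi function: for every complex number z with 8z + 1 ≠ 0, if the derivative of β vanishes at z, then β(z) = 0 or β(z) = 1. -/
/-! The critical points come from the factorisations
`β(z) = -64 z³(z - 1)/(8z + 1)` and `1 - β(z) = (8z² - 4z - 1)²/(8z + 1)`:
`β'(z) = -192 z² (8z² - 4z - 1)/(8z + 1)²` vanishes only at the triple zero `z = 0`
of `β` and at the double roots of `1 - β`. -/

noncomputable def belyiS31 (z : ℂ) : ℂ := -64 * (z ^ 3 * (z - 1)) / (8 * z + 1)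

lemma hasDerivAt_belyiS31 {z : ℂ} (hz : 8 * z + 1 ≠ 0) :
    HasDerivAt belyiS31 (-192 * z ^ 2 * (8 * z ^ 2 - 4 * z - 1) / (8 * z + 1) ^ 2) z := by
  have hnum : HasDerivAt (fun z : ℂ => -64 * (z ^ 3 * (z - 1))) (-256 * z ^ 3 + 192 * z ^ 2) z := by
    refine (((hasDerivAt_pow 3 z).fun_mul ((hasDerivAt_id' z).sub_const 1)).const_mul
      (-64 : ℂ)).congr_deriv ?_
    push_cast
    ring
  have hden : HasDerivAt (fun z : ℂ => 8 * z + 1) 8 z := by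
    simpa using ((hasDerivAt_id z).const_mul (8 : ℂ)).add_const 1
  exact (hnum.fun_div hden hz).congr_deriv (by ring)

@[simp]
lemma belyiS31_zero : belyiS31 0 = 0 := by
  simp [belyiS31]

lemma one_sub_belyiS31 {z : ℂ} (hz : 8 * z + 1 ≠ 0) :
    1 - belyiS31 z = (8 * z ^ 2 - 4 * z - 1) ^ 2 / (8 * z + 1) := by
  rw [belyiS31, eq_div_iff hz, sub_mul, div_mul_cancel₀ _ hz]
  ring

lemma critical_points_belyiS31 {z : ℂ} (hz : 8 * z + 1 ≠ 0) (h : deriv belyiS31 z = 0) :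
    z = 0 ∨ 8 * z ^ 2 - 4 * z - 1 = 0 := by
  rw [(hasDerivAt_belyiS31 hz).deriv, div_eq_zero_iff] at h
  have hz2 : (8 * z + 1) ^ 2 ≠ 0 := pow_ne_zero 2 hz
  simpa [hz2] using h

/-- The rational function `β(z) = −64 z³(z − 1)/(8z + 1)` is a Belyi function: all of its
finite critical values lie in `{0, 1}`. -/
theorem belyi_S31_31 (β : ℂ → ℂ)
    (hβ : ∀ z, β z = -64 * (z ^ 3 * (z - 1)) / (8 * z + 1)) :
    ∀ z : ℂ, 8 * z + 1 ≠ 0 → deriv β z = 0 → β z = 0 ∨ β z = 1 := by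
  obtain rfl : β = belyiS31 := funext hβ
  intro z hz hcrit
  rcases critical_points_belyiS31 hz hcrit with h0 | hq
  · exact .inl (h0 ▸ belyiS31_zero)
  · right
    have h := one_sub_belyiS31 hz
    rw [hq, zero_pow two_ne_zero, zero_div, sub_eq_zero] at h
    exact h.symm
end

section
/- The rational function β(z) = 256(z − 1)/(z⁴(z² + 4z + 20)) is a Belyi function: for every complex number z with z⁴(z² + 4z + 20) ≠ 0, if the derivative of β vanishes at z, then β(z) = 0 or β(z) = 1. -/
/-!
Away from the poles, `β' = 256 (D - (z - 1) D') / D²` with `D = z⁴(z² + 4z + 20)`, and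
`D - (z - 1) D' = -5 z³ q` with `q = z³ + 2z² + 8z - 16`. So every finite critical point is a
root of `q`, and there `β = 1` because `D - 256 (z - 1) = q²`.
-/

theorem deriv_div_eq_zero_iff {𝕜 : Type*} [NontriviallyNormedField 𝕜]
    {f g : 𝕜 → 𝕜} {f' g' z : 𝕜} (hf : HasDerivAt f f' z) (hg : HasDerivAt g g' z)
    (hz : g z ≠ 0) :
    deriv (fun w => f w / g w) z = 0 ↔ f' * g z - f z * g' = 0 := by
  rw [← Pi.div_def, (hf.div hg hz).deriv, div_eq_zero_iff, or_iff_left (pow_ne_zero 2 hz)]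

theorem hasDerivAt_belyi_den (z : ℂ) :
    HasDerivAt (fun w : ℂ => w ^ 4 * (w ^ 2 + 4 * w + 20))
      (4 * z ^ 3 * (z ^ 2 + 4 * z + 20) + z ^ 4 * (2 * z + 4)) z := by
  have hquad : HasDerivAt (fun w : ℂ => w ^ 2 + 4 * w + 20) (2 * z + 4) z := by
    simpa using ((hasDerivAt_pow 2 z).add ((hasDerivAt_id' z).const_mul 4)).add_const 20
  exact (hasDerivAt_pow 4 z).mul hquad

theorem belyi_wronskian (z : ℂ) :
    256 * (z ^ 4 * (z ^ 2 + 4 * z + 20))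
        - 256 * (z - 1) * (4 * z ^ 3 * (z ^ 2 + 4 * z + 20) + z ^ 4 * (2 * z + 4))
      = -1280 * z ^ 3 * (z ^ 3 + 2 * z ^ 2 + 8 * z - 16) := by
  ring

theorem belyi_den_sub_num (z : ℂ) :
    z ^ 4 * (z ^ 2 + 4 * z + 20) - 256 * (z - 1) = (z ^ 3 + 2 * z ^ 2 + 8 * z - 16) ^ 2 := by
  ring

/-- The rational function `β(z) = 256(z − 1)/(z⁴(z² + 4z + 20))` is a Belyi function: all
of its finite critical values lie in `{0, 1}`. -/
theorem belyi_S51_411 (β : ℂ → ℂ)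
    (hβ : ∀ z, β z = 256 * (z - 1) / (z ^ 4 * (z ^ 2 + 4 * z + 20))) :
    ∀ z : ℂ, z ^ 4 * (z ^ 2 + 4 * z + 20) ≠ 0 → deriv β z = 0 → β z = 0 ∨ β z = 1 := by
  obtain rfl : β = fun z => 256 * (z - 1) / (z ^ 4 * (z ^ 2 + 4 * z + 20)) := funext hβ
  intro z hD hcrit
  have hz : z ≠ 0 := by
    rintro rfl
    simp at hD
  have hnum : HasDerivAt (fun w : ℂ => 256 * (w - 1)) (256 * 1) z :=
    ((hasDerivAt_id z).sub_const 1).const_mul 256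
  rw [deriv_div_eq_zero_iff hnum (hasDerivAt_belyi_den z) hD, mul_one, belyi_wronskian] at hcrit
  have hq : z ^ 3 + 2 * z ^ 2 + 8 * z - 16 = 0 := by simpa [hz] using hcrit
  right
  rw [div_eq_one_iff_eq hD, eq_comm, ← sub_eq_zero, belyi_den_sub_num, hq]
  norm_num
end

section
/- The rational function β(z) = −(3z − 2)²/(4z³(z − 1)²(z + 2)) is a Belyi function: for every complex number z with z³(z − 1)²(z + 2) ≠ 0, if the derivative of β vanishes at z, then β(z) = 0 or β(z) = 1. -/
/-!
With `Q z = 4 z³ (z - 1)² (z + 2)` one has the polynomial identity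
`Q + (3z - 2)² = (2z³ - 3z + 2)²`, so `β = -(3z - 2)² / Q` and `1 - β = (2z³ - 3z + 2)² / Q`.
The numerator of `β'` factors as `24 z² (z - 1) (3z - 2) (2z³ - 3z + 2)`, so off the poles every
critical point is a zero of `β` or of `1 - β`.
-/

noncomputable def belyiS42 (z : ℂ) : ℂ := -((3 * z - 2) ^ 2) / (4 * z ^ 3 * (z - 1) ^ 2 * (z + 2))

section

variable {z : ℂ}

theorem hasDerivAt_belyiS42 (h0 : z ≠ 0) (h1 : z - 1 ≠ 0) (h2 : z + 2 ≠ 0) :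
    HasDerivAt belyiS42
      (3 * (3 * z - 2) * (2 * z ^ 3 - 3 * z + 2) / (2 * z ^ 4 * (z - 1) ^ 3 * (z + 2) ^ 2)) z := by
  have hnum : HasDerivAt (fun z : ℂ => -((3 * z - 2) ^ 2)) (-(2 * (3 * z - 2) * 3)) z := by
    simpa using ((((hasDerivAt_id z).const_mul 3).sub_const 2).fun_pow 2).fun_neg
  have hden : HasDerivAt (fun z : ℂ => 4 * z ^ 3 * (z - 1) ^ 2 * (z + 2))
      (4 * (3 * z ^ 2) * (z - 1) ^ 2 * (z + 2) + 4 * z ^ 3 * (2 * (z - 1)) * (z + 2)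
        + 4 * z ^ 3 * (z - 1) ^ 2) z := by
    simpa [add_mul] using ((((hasDerivAt_pow 3 z).const_mul 4).fun_mul
      (((hasDerivAt_id z).sub_const 1).fun_pow 2)).fun_mul ((hasDerivAt_id z).add_const 2))
  refine (hnum.div hden (by simp [*])).congr_deriv ?_
  field_simp
  ring

theorem one_sub_belyiS42 (h0 : z ≠ 0) (h1 : z - 1 ≠ 0) (h2 : z + 2 ≠ 0) :
    1 - belyiS42 z = (2 * z ^ 3 - 3 * z + 2) ^ 2 / (4 * z ^ 3 * (z - 1) ^ 2 * (z + 2)) := by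
  rw [belyiS42]
  field_simp
  ring

theorem belyiS42_eq_zero_or_eq_one_of_deriv_eq_zero (h0 : z ≠ 0) (h1 : z - 1 ≠ 0)
    (h2 : z + 2 ≠ 0) (hcrit : deriv belyiS42 z = 0) : belyiS42 z = 0 ∨ belyiS42 z = 1 := by
  rw [(hasDerivAt_belyiS42 h0 h1 h2).deriv] at hcrit
  obtain hA | hB : 3 * z - 2 = 0 ∨ 2 * z ^ 3 - 3 * z + 2 = 0 := by
    simpa [h0, h1, h2] using hcrit
  · left
    simp [belyiS42, hA]
  · right
    have h := one_sub_belyiS42 h0 h1 h2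
    rw [hB, zero_pow two_ne_zero, zero_div, sub_eq_zero] at h
    exact h.symm

end

/-- The rational function `β(z) = −(3z − 2)²/(4z³(z − 1)²(z + 2))` is a Belyi function:
all of its finite critical values lie in `{0, 1}`. -/
theorem belyi_S42_321 (β : ℂ → ℂ)
    (hβ : ∀ z, β z = -((3 * z - 2) ^ 2) / (4 * z ^ 3 * (z - 1) ^ 2 * (z + 2))) :
    ∀ z : ℂ, z ^ 3 * (z - 1) ^ 2 * (z + 2) ≠ 0 → deriv β z = 0 → β z = 0 ∨ β z = 1 := by
  obtain rfl : β = belyiS42 := funext hβ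
  intro z hz hcrit
  obtain ⟨⟨h0, h1⟩, h2⟩ : (z ≠ 0 ∧ z - 1 ≠ 0) ∧ z + 2 ≠ 0 := by
    simpa only [mul_ne_zero_iff, pow_ne_zero_iff, ne_eq, OfNat.ofNat_ne_zero, not_false_eq_true]
      using hz
  exact belyiS42_eq_zero_or_eq_one_of_deriv_eq_zero h0 h1 h2 hcrit
end

section
/- The rational function β(z) = z⁴(4z² − 3)/(4(z² − 1)³) is a Belyi function: for every complex number z with z² − 1 ≠ 0, if the derivative of β vanishes at z, then β(z) = 0 or β(z) = 1. -/
/-!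
The derivative of `β` is `3 z³ (2 − 3z²) / (2 (z² − 1)⁴)` and
`β − 1 = (3z² − 2)² / (4 (z² − 1)³)`. So a finite critical point is either `z = 0`, a zero of `β`,
or a root of `3z² − 2`, which is a zero of `β − 1`.
-/

noncomputable def belyi (z : ℂ) : ℂ := z ^ 4 * (4 * z ^ 2 - 3) / (4 * (z ^ 2 - 1) ^ 3)

theorem hasDerivAt_belyi {z : ℂ} (hz : z ^ 2 - 1 ≠ 0) :
    HasDerivAt belyi (3 * z ^ 3 * (2 - 3 * z ^ 2) / (2 * (z ^ 2 - 1) ^ 4)) z := by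
  have hnum : HasDerivAt (fun x : ℂ => x ^ 4 * (4 * x ^ 2 - 3)) (24 * z ^ 5 - 12 * z ^ 3) z := by
    refine ((hasDerivAt_pow 4 z).mul
      (((hasDerivAt_pow 2 z).const_mul 4).sub_const 3)).congr_deriv ?_
    push_cast
    ring
  have hden : HasDerivAt (fun x : ℂ => 4 * (x ^ 2 - 1) ^ 3) (24 * z * (z ^ 2 - 1) ^ 2) z := by
    refine ((((hasDerivAt_pow 2 z).sub_const 1).pow 3).const_mul 4).congr_deriv ?_
    push_cast
    ring
  refine (hnum.div hden (by simpa using hz)).congr_deriv ?_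
  field_simp
  ring

theorem belyi_sub_one {z : ℂ} (hz : z ^ 2 - 1 ≠ 0) :
    belyi z - 1 = (3 * z ^ 2 - 2) ^ 2 / (4 * (z ^ 2 - 1) ^ 3) := by
  unfold belyi
  field_simp
  ring

theorem eq_zero_or_of_deriv_belyi_eq_zero {z : ℂ} (hz : z ^ 2 - 1 ≠ 0)
    (h : deriv belyi z = 0) : z = 0 ∨ 3 * z ^ 2 - 2 = 0 := by
  rw [(hasDerivAt_belyi hz).deriv] at h
  have hz' : z ^ 3 * (3 * z ^ 2 - 2) = 0 := by
    have := (div_eq_zero_iff.mp h).resolve_right (by simpa using hz)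
    linear_combination -this / 3
  simpa using hz'

/-- The rational function `β(z) = z⁴(4z² − 3)/(4(z² − 1)³)` is a Belyi function: all of
its finite critical values lie in `{0, 1}`. -/
theorem belyi_S411_33 (β : ℂ → ℂ)
    (hβ : ∀ z, β z = z ^ 4 * (4 * z ^ 2 - 3) / (4 * (z ^ 2 - 1) ^ 3)) :
    ∀ z : ℂ, z ^ 2 - 1 ≠ 0 → deriv β z = 0 → β z = 0 ∨ β z = 1 := by
  obtain rfl : β = belyi := funext hβ
  intro z hz hcrit
  rcases eq_zero_or_of_deriv_belyi_eq_zero hz hcrit with rfl | hroot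
  · left
    simp [belyi]
  · right
    rw [← sub_eq_zero, belyi_sub_one hz, hroot]
    simp
end

section
/- The rational function β(z) = 16384 z(z − 1)⁷/(896z³ − 2912z² + 3216z − 1225) is a Belyi function: for every complex number z with 896z³ − 2912z² + 3216z − 1225 ≠ 0, if the derivative of β vanishes at z, then β(z) = 0 or β(z) = 1. -/
/-!
The numerator of `β'` factors as `573440 (z - 1)⁶ R(z)` with
`R(z) = 128z⁴ − 448z³ + 560z² − 280z + 35`, and numerator minus denominator of `β` is `R(z)²`.
So a finite critical point is either `z = 1`, where `β = 0`, or a root of `R`, where `β = 1`.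
-/

theorem wronskian_eq_zero_of_deriv_div_eq_zero {𝕜 : Type*} [NontriviallyNormedField 𝕜]
    {f g : 𝕜 → 𝕜} {f' g' x : 𝕜} (hf : HasDerivAt f f' x) (hg : HasDerivAt g g' x)
    (hx : g x ≠ 0) (h : deriv (f / g) x = 0) : f' * g x - f x * g' = 0 := by
  rw [(hf.div hg hx).deriv, div_eq_zero_iff] at h
  exact h.resolve_right (pow_ne_zero 2 hx)

namespace Belyi

def num (z : ℂ) : ℂ := 16384 * (z * (z - 1) ^ 7)

def den (z : ℂ) : ℂ := 896 * z ^ 3 - 2912 * z ^ 2 + 3216 * z - 1225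

def R (z : ℂ) : ℂ := 128 * z ^ 4 - 448 * z ^ 3 + 560 * z ^ 2 - 280 * z + 35

theorem hasDerivAt_num (z : ℂ) : HasDerivAt num (16384 * ((z - 1) ^ 6 * (8 * z - 1))) z :=
  (((hasDerivAt_id' z).fun_mul (((hasDerivAt_id' z).sub_const 1).fun_pow 7)).const_mul
    16384).congr_deriv (by push_cast; ring)

theorem hasDerivAt_den (z : ℂ) : HasDerivAt den (2688 * z ^ 2 - 5824 * z + 3216) z :=
  (((((hasDerivAt_pow 3 z).const_mul 896).fun_sub ((hasDerivAt_pow 2 z).const_mul 2912)).fun_add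
    ((hasDerivAt_id' z).const_mul 3216)).sub_const 1225).congr_deriv (by push_cast; ring)

theorem wronskian_eq (z : ℂ) :
    16384 * ((z - 1) ^ 6 * (8 * z - 1)) * den z - num z * (2688 * z ^ 2 - 5824 * z + 3216) =
      573440 * ((z - 1) ^ 6 * R z) := by
  simp only [num, den, R]
  ring

theorem num_sub_den (z : ℂ) : num z - den z = R z ^ 2 := by
  simp only [num, den, R]
  ring

end Belyi

open Belyi in
/-- The rational function `β(z) = 16384 z(z − 1)⁷/(896z³ − 2912z² + 3216z − 1225)` is a
Belyi function: all of its finite critical values lie in `{0, 1}`. -/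
theorem belyi_S71_5111 (β : ℂ → ℂ)
    (hβ : ∀ z, β z = 16384 * (z * (z - 1) ^ 7) /
      (896 * z ^ 3 - 2912 * z ^ 2 + 3216 * z - 1225)) :
    ∀ z : ℂ, 896 * z ^ 3 - 2912 * z ^ 2 + 3216 * z - 1225 ≠ 0 →
      deriv β z = 0 → β z = 0 ∨ β z = 1 := by
  intro z hQ hcrit
  change den z ≠ 0 at hQ
  obtain rfl : β = num / den := funext hβ
  have hW := wronskian_eq_zero_of_deriv_div_eq_zero (hasDerivAt_num z) (hasDerivAt_den z) hQ hcrit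
  rw [wronskian_eq, mul_eq_zero, mul_eq_zero] at hW
  rcases hW with hc | h1 | hR
  · norm_num at hc
  · left
    obtain rfl : z = 1 := sub_eq_zero.mp (pow_eq_zero_iff (by norm_num) |>.mp h1)
    simp [num]
  · right
    rw [Pi.div_apply, div_eq_one_iff_eq hQ, ← sub_eq_zero, num_sub_den, hR, sq, mul_zero]
end

section
/- The rational function β(z) = −1728 z/((z² − 5z + 1)³(z² − 13z + 49)) is a Belyi function: for every complex number z with (z² − 5z + 1)(z² − 13z + 49) ≠ 0, if the derivative of β vanishes at z, then β(z) = 0 or β(z) = 1. -/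
/-!
Write `β = -1728 z / D` with `D = (z² - 5z + 1)³ (z² - 13z + 49)`. Two polynomial identities
carry the proof: `D + 1728 z = A²` with `A = z⁴ - 14z³ + 63z² - 70z - 7`, so `1 - β = A² / D`,
and the numerator of `β'` is `-1728 (D - z D') = 12096 (z² - 5z + 1)² A`. Hence a finite critical
point off the poles is a root of `A`, where `β = 1`.
-/

section Quotient

variable {𝕜 : Type*} [NontriviallyNormedField 𝕜] {f g : 𝕜 → 𝕜} {f' g' x : 𝕜}

theorem sub_mul_eq_zero_of_deriv_div_eq_zero (hf : HasDerivAt f f' x)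
    (hg : HasDerivAt g g' x) (hx : g x ≠ 0) (h : deriv (fun y => f y / g y) x = 0) :
    f' * g x - f x * g' = 0 := by
  rw [(hf.fun_div hg hx).deriv, div_eq_zero_iff] at h
  exact h.resolve_right (pow_ne_zero 2 hx)

end Quotient

section Identities

variable {R : Type*} [CommRing R]

def belyiDenom (z : R) : R := (z ^ 2 - 5 * z + 1) ^ 3 * (z ^ 2 - 13 * z + 49)

def belyiDenomDeriv (z : R) : R :=
  3 * (z ^ 2 - 5 * z + 1) ^ 2 * (2 * z - 5) * (z ^ 2 - 13 * z + 49) +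
    (z ^ 2 - 5 * z + 1) ^ 3 * (2 * z - 13)

def belyiCritPoly (z : R) : R := z ^ 4 - 14 * z ^ 3 + 63 * z ^ 2 - 70 * z - 7

theorem belyiDenom_add_eq_belyiCritPoly_sq (z : R) :
    belyiDenom z + 1728 * z = belyiCritPoly z ^ 2 := by
  unfold belyiDenom belyiCritPoly; ring

theorem belyi_wronskian_eq (z : R) :
    -1728 * belyiDenom z - -1728 * z * belyiDenomDeriv z =
      12096 * ((z ^ 2 - 5 * z + 1) ^ 2 * belyiCritPoly z) := by
  unfold belyiDenom belyiDenomDeriv belyiCritPoly; ring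

end Identities

theorem hasDerivAt_belyiDenom {𝕜 : Type*} [NontriviallyNormedField 𝕜] (z : 𝕜) :
    HasDerivAt belyiDenom (belyiDenomDeriv z) z := by
  have hquad (b c : 𝕜) : HasDerivAt (fun w => w ^ 2 - b * w + c) (2 * z - b) z := by
    simpa using ((hasDerivAt_pow 2 z).sub ((hasDerivAt_id z).const_mul b)).add_const c
  exact ((hquad 5 1).pow 3).mul (hquad 13 49)

/-- The rational function `β(z) = −1728 z/((z² − 5z + 1)³(z² − 13z + 49))` is a Belyi
function: all of its finite critical values lie in `{0, 1}`. -/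
theorem belyi_S71_3311 (β : ℂ → ℂ)
    (hβ : ∀ z, β z = -1728 * z /
      ((z ^ 2 - 5 * z + 1) ^ 3 * (z ^ 2 - 13 * z + 49))) :
    ∀ z : ℂ, (z ^ 2 - 5 * z + 1) * (z ^ 2 - 13 * z + 49) ≠ 0 →
      deriv β z = 0 → β z = 0 ∨ β z = 1 := by
  intro z hz hcrit
  obtain ⟨hp, hq⟩ := mul_ne_zero_iff.mp hz
  have hD : belyiDenom z ≠ 0 := mul_ne_zero (pow_ne_zero 3 hp) hq
  have hβfun : β = fun w => -1728 * w / belyiDenom w := funext hβ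
  rw [hβfun] at hcrit
  have hnum := sub_mul_eq_zero_of_deriv_div_eq_zero ((hasDerivAt_id z).const_mul (-1728))
    (hasDerivAt_belyiDenom z) hD hcrit
  simp only [mul_one, id] at hnum
  rw [belyi_wronskian_eq] at hnum
  have hA : belyiCritPoly z = 0 := by
    simpa [hp] using hnum
  right
  rw [hβ z, ← belyiDenom, div_eq_one_iff_eq hD]
  linear_combination -belyiDenom_add_eq_belyiCritPoly_sq z - belyiCritPoly z * hA
end

section
/- Let F(x) = (1/4)(x − 1)(4x + 5)(x² + 4x − 20), P(x) = (1/162)(x⁵ + (65/8)x⁴ + x³ − 64x² − 16x + 80), and Q(x) = (1/162)(x³ + 6x² − 16). Then the following identities of rational functions (polynomial identities after clearing denominators) hold over ℚ: P(x)² − Q(x)²·F(x) = (x + 8)²·x⁶/20736, and (P(x) − 1)² − Q(x)²·F(x) = (x⁴ + 8x³ − 128x − 16)²/20736. Consequently, for the function β = P(x) + Q(x)·y on the elliptic curve y² = F(x), the norms are n₀ = β·β^τ = (x + 8)²x⁶/20736 and n₁ = (β − 1)(β^τ − 1) = (x⁴ + 8x³ − 128x − 16)²/20736, where τ is the hyperelliptic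 involution (x, y) ↦ (x, −y). -/
/-!
On the curve `y² = F(x)` the conjugate `β^τ = P − Q y` gives `(β − c)(β^τ − c) = (P − c)² − Q² F`,
so both norms reduce to the two one-variable identities, which are checked over any field of
characteristic zero; over `ℚ` they lift to identities in `ℚ[X]` because `ℚ` is infinite.
-/

open Polynomial

namespace Norms_T62_53

section Field

variable {K : Type*} [Field K]

def curveF (x : K) : K := 1 / 4 * (x - 1) * (4 * x + 5) * (x ^ 2 + 4 * x - 20)

def betaP (x : K) : K :=
  1 / 162 * (x ^ 5 + 65 / 8 * x ^ 4 + x ^ 3 - 64 * x ^ 2 - 16 * x + 80)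

def betaQ (x : K) : K := 1 / 162 * (x ^ 3 + 6 * x ^ 2 - 16)

variable [CharZero K]

theorem betaP_sq_sub_betaQ_sq_mul_curveF (x : K) :
    betaP x ^ 2 - betaQ x ^ 2 * curveF x = (x + 8) ^ 2 * x ^ 6 / 20736 := by
  unfold betaP betaQ curveF
  ring

theorem betaP_sub_one_sq_sub_betaQ_sq_mul_curveF (x : K) :
    (betaP x - 1) ^ 2 - betaQ x ^ 2 * curveF x =
      (x ^ 4 + 8 * x ^ 3 - 128 * x - 16) ^ 2 / 20736 := by
  unfold betaP betaQ curveF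
  ring

end Field

theorem sub_mul_conj_sub {R : Type*} [CommRing R] {f y : R} (p q c : R) (hy : y ^ 2 = f) :
    (p + q * y - c) * (p + q * -y - c) = (p - c) ^ 2 - q ^ 2 * f := by
  rw [← hy]
  ring

theorem eval_curveF (x : ℚ) :
    (C (1 / 4 : ℚ) * (X - 1) * (4 * X + 5) * (X ^ 2 + 4 * X - 20)).eval x = curveF x := by
  simp [curveF]

theorem eval_betaP (x : ℚ) :
    (C (1 / 162 : ℚ) *
      (X ^ 5 + C (65 / 8 : ℚ) * X ^ 4 + X ^ 3 - 64 * X ^ 2 - 16 * X + 80)).eval x = betaP x := by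
  simp [betaP]

theorem eval_betaQ (x : ℚ) :
    (C (1 / 162 : ℚ) * (X ^ 3 + 6 * X ^ 2 - 16)).eval x = betaQ x := by
  simp [betaQ]

end Norms_T62_53

open Norms_T62_53 in
/-- For `F(x) = (1/4)(x − 1)(4x + 5)(x² + 4x − 20)`,
`P(x) = (1/162)(x⁵ + (65/8)x⁴ + x³ − 64x² − 16x + 80)`, and
`Q(x) = (1/162)(x³ + 6x² − 16)`, the identities
`P² − Q²F = (x + 8)²x⁶/20736` and `(P − 1)² − Q²F = (x⁴ + 8x³ − 128x − 16)²/20736` hold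
over ℚ.  Consequently, for `β = P(x) + Q(x)y` on the elliptic curve `y² = F(x)`, the
norms are `n₀ = β·β^τ = (x + 8)²x⁶/20736` and
`n₁ = (β − 1)(β^τ − 1) = (x⁴ + 8x³ − 128x − 16)²/20736`, where `τ` is the hyperelliptic
involution `(x, y) ↦ (x, −y)`. -/
theorem norms_T62_53
    (F P Q : Polynomial ℚ)
    (hF : F = C (1/4 : ℚ) * (X - 1) * (4 * X + 5) * (X ^ 2 + 4 * X - 20))
    (hP : P = C (1/162 : ℚ) *
      (X ^ 5 + C (65/8 : ℚ) * X ^ 4 + X ^ 3 - 64 * X ^ 2 - 16 * X + 80))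
    (hQ : Q = C (1/162 : ℚ) * (X ^ 3 + 6 * X ^ 2 - 16)) :
    (P ^ 2 - Q ^ 2 * F = C (1/20736 : ℚ) * ((X + 8) ^ 2 * X ^ 6) ∧
     (P - 1) ^ 2 - Q ^ 2 * F =
       C (1/20736 : ℚ) * (X ^ 4 + 8 * X ^ 3 - 128 * X - 16) ^ 2) ∧
    (∀ x y : ℂ, y ^ 2 = (1/4) * (x - 1) * (4 * x + 5) * (x ^ 2 + 4 * x - 20) →
      ((1/162) * (x ^ 5 + (65/8) * x ^ 4 + x ^ 3 - 64 * x ^ 2 - 16 * x + 80) +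
          (1/162) * (x ^ 3 + 6 * x ^ 2 - 16) * y) *
        ((1/162) * (x ^ 5 + (65/8) * x ^ 4 + x ^ 3 - 64 * x ^ 2 - 16 * x + 80) +
          (1/162) * (x ^ 3 + 6 * x ^ 2 - 16) * (-y)) =
        (x + 8) ^ 2 * x ^ 6 / 20736 ∧
      ((1/162) * (x ^ 5 + (65/8) * x ^ 4 + x ^ 3 - 64 * x ^ 2 - 16 * x + 80) +
          (1/162) * (x ^ 3 + 6 * x ^ 2 - 16) * y - 1) *
        ((1/162) * (x ^ 5 + (65/8) * x ^ 4 + x ^ 3 - 64 * x ^ 2 - 16 * x + 80) +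
          (1/162) * (x ^ 3 + 6 * x ^ 2 - 16) * (-y) - 1) =
        (x ^ 4 + 8 * x ^ 3 - 128 * x - 16) ^ 2 / 20736) := by
  subst hF hP hQ
  refine ⟨⟨?_, ?_⟩, fun x y hy => ⟨?_, ?_⟩⟩
  · refine Polynomial.funext fun x => ?_
    rw [eval_sub, eval_mul, eval_pow, eval_pow, eval_betaP, eval_betaQ, eval_curveF,
      betaP_sq_sub_betaQ_sq_mul_curveF]
    simp [div_eq_inv_mul]
  · refine Polynomial.funext fun x => ?_
    rw [eval_sub, eval_mul, eval_pow, eval_pow, eval_sub, eval_one, eval_betaP, eval_betaQ,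
      eval_curveF, betaP_sub_one_sq_sub_betaQ_sq_mul_curveF]
    simp [div_eq_inv_mul]
  · have hnorm := sub_mul_conj_sub (betaP x) (betaQ x) 0 hy
    rw [sub_zero, sub_zero, sub_zero] at hnorm
    exact hnorm.trans (betaP_sq_sub_betaQ_sq_mul_curveF x)
  · exact (sub_mul_conj_sub (betaP x) (betaQ x) 1 hy).trans
      (betaP_sub_one_sq_sub_betaQ_sq_mul_curveF x)
end

section
/- Let F(x) = (x² − 2)(x⁴ − 2x² + 2), P(x) = −(x⁴ − 2x² + 1)² − x²·F(x), and Q(x) = 2x(x⁴ − 2x² + 1), so that the function β = −(x⁴ − 2x² + 1 − xy)² on the genus-2 curve y² = F(x) equals P(x) + Q(x)·y. Then the following polynomial identities hold over ℚ: P(x)² − Q(x)²·F(x) = 1, and (P(x) − 1)² − Q(x)²·F(x) = 4(x − 1)⁴(x + 1)⁴. Consequently the norms of β satisfy n₀ = β·β^τ = 1 and n₁ = (β − 1)(β^τ − 1) = 4(x − 1)⁴(x + 1)⁴, where τ is the hyperelliptic involution (x, y) ↦ (x, −y). -/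
open Polynomial

/-! On the curve `y² = F(x)` one has `β = P + Q y`, so `n₀` and `n₁` are the norms
`P² − Q²F` and `(P − 1)² − Q²F`; both identities are ring identities in `x` alone, so they hold
simultaneously in `ℚ[X]` (at `x = X`) and at every complex point. -/

theorem mul_conj_eq_of_sq_eq {R : Type*} [CommRing R] {f p q y : R} (hy : y ^ 2 = f) :
    (p + q * y) * (p + q * -y) = p ^ 2 - q ^ 2 * f := by
  linear_combination (-q ^ 2) * hy

namespace GenusTwoBeta

variable {R : Type*} [CommRing R]

def F (x : R) : R := (x ^ 2 - 2) * (x ^ 4 - 2 * x ^ 2 + 2)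

def P (x : R) : R := -((x ^ 4 - 2 * x ^ 2 + 1) ^ 2) - x ^ 2 * F x

def Q (x : R) : R := 2 * x * (x ^ 4 - 2 * x ^ 2 + 1)

def β (x y : R) : R := -((x ^ 4 - 2 * x ^ 2 + 1 - x * y) ^ 2)

theorem β_eq {x y : R} (h : y ^ 2 = F x) : β x y = P x + Q x * y := by
  unfold β P Q
  linear_combination (-x ^ 2) * h

theorem P_sq_sub_Q_sq_mul_F (x : R) : P x ^ 2 - Q x ^ 2 * F x = 1 := by
  unfold P Q F
  ring

theorem P_sub_one_sq_sub_Q_sq_mul_F (x : R) :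
    (P x - 1) ^ 2 - Q x ^ 2 * F x = 4 * (x - 1) ^ 4 * (x + 1) ^ 4 := by
  unfold P Q F
  ring

theorem β_mul_β_neg {x y : R} (h : y ^ 2 = F x) : β x y * β x (-y) = 1 := by
  have h' : (-y) ^ 2 = F x := by rw [neg_sq, h]
  rw [β_eq h, β_eq h', mul_conj_eq_of_sq_eq h, P_sq_sub_Q_sq_mul_F]

theorem β_sub_one_mul_β_neg_sub_one {x y : R} (h : y ^ 2 = F x) :
    (β x y - 1) * (β x (-y) - 1) = 4 * (x - 1) ^ 4 * (x + 1) ^ 4 := by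
  have h' : (-y) ^ 2 = F x := by rw [neg_sq, h]
  rw [β_eq h, β_eq h', add_sub_right_comm, add_sub_right_comm (P x),
    mul_conj_eq_of_sq_eq h, P_sub_one_sq_sub_Q_sq_mul_F]

end GenusTwoBeta

open GenusTwoBeta in
/-- For `F(x) = (x² − 2)(x⁴ − 2x² + 2)`, `P(x) = −(x⁴ − 2x² + 1)² − x²F(x)`, and
`Q(x) = 2x(x⁴ − 2x² + 1)`, the function `β = −(x⁴ − 2x² + 1 − xy)²` on the genus-2 curve
`y² = F(x)` equals `P(x) + Q(x)y`; the polynomial identities `P² − Q²F = 1` and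
`(P − 1)² − Q²F = 4(x − 1)⁴(x + 1)⁴` hold over ℚ.  Consequently the norms of `β` satisfy
`n₀ = β·β^τ = 1` and `n₁ = (β − 1)(β^τ − 1) = 4(x − 1)⁴(x + 1)⁴`, where `τ` is the
hyperelliptic involution `(x, y) ↦ (x, −y)`. -/
theorem norms_P8_8_2
    (F P Q : Polynomial ℚ)
    (hF : F = (X ^ 2 - 2) * (X ^ 4 - 2 * X ^ 2 + 2))
    (hP : P = -((X ^ 4 - 2 * X ^ 2 + 1) ^ 2) - X ^ 2 * F)
    (hQ : Q = 2 * X * (X ^ 4 - 2 * X ^ 2 + 1)) :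
    (∀ x y : ℂ, y ^ 2 = (x ^ 2 - 2) * (x ^ 4 - 2 * x ^ 2 + 2) →
      -((x ^ 4 - 2 * x ^ 2 + 1 - x * y) ^ 2) =
        (-((x ^ 4 - 2 * x ^ 2 + 1) ^ 2) -
            x ^ 2 * ((x ^ 2 - 2) * (x ^ 4 - 2 * x ^ 2 + 2))) +
          2 * x * (x ^ 4 - 2 * x ^ 2 + 1) * y) ∧
    (P ^ 2 - Q ^ 2 * F = 1 ∧
     (P - 1) ^ 2 - Q ^ 2 * F = 4 * (X - 1) ^ 4 * (X + 1) ^ 4) ∧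
    (∀ x y : ℂ, y ^ 2 = (x ^ 2 - 2) * (x ^ 4 - 2 * x ^ 2 + 2) →
      (-((x ^ 4 - 2 * x ^ 2 + 1 - x * y) ^ 2)) *
        (-((x ^ 4 - 2 * x ^ 2 + 1 - x * (-y)) ^ 2)) = 1 ∧
      (-((x ^ 4 - 2 * x ^ 2 + 1 - x * y) ^ 2) - 1) *
        (-((x ^ 4 - 2 * x ^ 2 + 1 - x * (-y)) ^ 2) - 1) =
        4 * (x - 1) ^ 4 * (x + 1) ^ 4) := by
  subst hF hP hQ
  exact ⟨fun _ _ h => β_eq h, ⟨P_sq_sub_Q_sq_mul_F X, P_sub_one_sq_sub_Q_sq_mul_F X⟩,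
    fun _ _ h => ⟨β_mul_β_neg h, β_sub_one_mul_β_neg_sub_one h⟩⟩
end
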